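/- (Evenness and strict monotonicity of the spectral map.) Let N be a positive integer and s ∈ (0,1) with 2s < N. Then γ_{−β} = γ_β for every β with |β| < (N−2s)/2, and the map β ↦ γ_β is strictly decreasing on [0, (N−2s)/2): if 0 ≤ β₁ < β₂ < (N−2s)/2 then γ_{β₂} < γ_{β₁}. -/
import Mathlib


open MeasureTheory Real

open Filter Finset in
private lemma gammaSeq_pair_mul (b x : ℝ) {n : ℕ} (hn : n ≠ 0) :
    Real.GammaSeq (b + x) n * Real.GammaSeq (b - x) n =
      (n : ℝ) ^ (2 * b) * ((n.factorial : ℝ) * (n.factorial : ℝ)) /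
        ∏ j ∈ Finset.range (n + 1), ((b + (j : ℝ)) ^ 2 - x ^ 2) := by
  have hn' : (0 : ℝ) < n := by positivity
  unfold Real.GammaSeq
  have h1 : (n : ℝ) ^ (b + x) * (n.factorial : ℝ) * ((n : ℝ) ^ (b - x) * (n.factorial : ℝ)) =
      (n : ℝ) ^ (2 * b) * ((n.factorial : ℝ) * (n.factorial : ℝ)) := by
    rw [mul_mul_mul_comm, ← Real.rpow_add hn', show b + x + (b - x) = 2 * b by ring]
  rw [div_mul_div_comm, ← Finset.prod_mul_distrib, h1]
  congr 1
  apply Finset.prod_congr rfl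
  intro j _
  ring

open Filter Finset in
private lemma prod_pos_aux {b x : ℝ} (hx0 : 0 ≤ x) (hxb : x < b) (n : ℕ) :
    0 < ∏ j ∈ Finset.range (n + 1), ((b + (j : ℝ)) ^ 2 - x ^ 2) := by
  apply Finset.prod_pos
  intro j _
  have hj : (0 : ℝ) ≤ (j : ℝ) := j.cast_nonneg
  nlinarith

open Filter Finset in
private lemma core_prod_ineq (a b x₁ x₂ : ℝ) (hb : 0 < b) (hba : b < a) (hx₁ : 0 ≤ x₁)
    (hx : x₁ < x₂) (hxb : x₂ < b) (n : ℕ) :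
    ((b ^ 2 - x₁ ^ 2) * (a ^ 2 - x₂ ^ 2)) *
        ((∏ j ∈ Finset.range (n + 1), ((b + (j : ℝ)) ^ 2 - x₂ ^ 2)) *
          (∏ j ∈ Finset.range (n + 1), ((a + (j : ℝ)) ^ 2 - x₁ ^ 2))) ≤
      ((b ^ 2 - x₂ ^ 2) * (a ^ 2 - x₁ ^ 2)) *
        ((∏ j ∈ Finset.range (n + 1), ((b + (j : ℝ)) ^ 2 - x₁ ^ 2)) *
          (∏ j ∈ Finset.range (n + 1), ((a + (j : ℝ)) ^ 2 - x₂ ^ 2))) := by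
  have hx₂0 : 0 ≤ x₂ := le_of_lt (lt_of_le_of_lt hx₁ hx)
  have hxa : x₂ < a := lt_trans hxb hba
  rw [← Finset.prod_mul_distrib, ← Finset.prod_mul_distrib,
    Finset.prod_range_succ', Finset.prod_range_succ']
  push_cast
  have hptle : ∀ j ∈ Finset.range n,
      ((b + ((j : ℝ) + 1)) ^ 2 - x₂ ^ 2) * ((a + ((j : ℝ) + 1)) ^ 2 - x₁ ^ 2) ≤
        ((b + ((j : ℝ) + 1)) ^ 2 - x₁ ^ 2) * ((a + ((j : ℝ) + 1)) ^ 2 - x₂ ^ 2) := by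
    intro j _
    have hj : (0 : ℝ) ≤ (j : ℝ) := j.cast_nonneg
    have h1 : x₁ ^ 2 ≤ x₂ ^ 2 := by nlinarith
    have h2 : (b + ((j : ℝ) + 1)) ^ 2 ≤ (a + ((j : ℝ) + 1)) ^ 2 := by nlinarith
    nlinarith [mul_nonneg (sub_nonneg.2 h2) (sub_nonneg.2 h1)]
  have hptnn : ∀ j ∈ Finset.range n,
      0 ≤ ((b + ((j : ℝ) + 1)) ^ 2 - x₂ ^ 2) * ((a + ((j : ℝ) + 1)) ^ 2 - x₁ ^ 2) := by
    intro j _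
    have hj : (0 : ℝ) ≤ (j : ℝ) := j.cast_nonneg
    have h1 : 0 ≤ (b + ((j : ℝ) + 1)) ^ 2 - x₂ ^ 2 := by nlinarith
    have h2 : 0 ≤ (a + ((j : ℝ) + 1)) ^ 2 - x₁ ^ 2 := by nlinarith
    exact mul_nonneg h1 h2
  have hPF : (∏ j ∈ Finset.range n,
        (((b + ((j : ℝ) + 1)) ^ 2 - x₂ ^ 2) * ((a + ((j : ℝ) + 1)) ^ 2 - x₁ ^ 2))) ≤
      ∏ j ∈ Finset.range n,
        (((b + ((j : ℝ) + 1)) ^ 2 - x₁ ^ 2) * ((a + ((j : ℝ) + 1)) ^ 2 - x₂ ^ 2)) :=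
    Finset.prod_le_prod hptnn hptle
  have hPFnn : 0 ≤ ∏ j ∈ Finset.range n,
      (((b + ((j : ℝ) + 1)) ^ 2 - x₂ ^ 2) * ((a + ((j : ℝ) + 1)) ^ 2 - x₁ ^ 2)) :=
    Finset.prod_nonneg hptnn
  have hK1 : 0 < (b ^ 2 - x₁ ^ 2) * (a ^ 2 - x₂ ^ 2) := by
    have h1 : 0 < b ^ 2 - x₁ ^ 2 := by nlinarith
    have h2 : 0 < a ^ 2 - x₂ ^ 2 := by nlinarith
    exact mul_pos h1 h2
  have hK2 : 0 < (b ^ 2 - x₂ ^ 2) * (a ^ 2 - x₁ ^ 2) := by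
    have h1 : 0 < b ^ 2 - x₂ ^ 2 := by nlinarith
    have h2 : 0 < a ^ 2 - x₁ ^ 2 := by nlinarith
    exact mul_pos h1 h2
  nlinarith [mul_le_mul_of_nonneg_left hPF (le_of_lt (mul_pos hK1 hK2)), hPFnn,
    mul_pos hK1 hK2]

private lemma aux_div (A B Pa₁ Pa₂ Pb₁ Pb₂ cn cd : ℝ) (hA : 0 < A) (hB : 0 < B)
    (hPa₁ : 0 < Pa₁) (hPa₂ : 0 < Pa₂) (hPb₁ : 0 < Pb₁) (hPb₂ : 0 < Pb₂) (hcd : 0 < cd)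
    (h : cd * (Pb₂ * Pa₁) ≤ cn * (Pb₁ * Pa₂)) :
    A / Pa₂ / (B / Pb₂) ≤ cn / cd * (A / Pa₁ / (B / Pb₁)) := by
  have h1 : A / Pa₂ / (B / Pb₂) = A * Pb₂ / (B * Pa₂) := by
    field_simp
  have h1' : A / Pa₁ / (B / Pb₁) = A * Pb₁ / (B * Pa₁) := by
    field_simp
  have h2 : cn / cd * (A / Pa₁ / (B / Pb₁)) = cn * (A * Pb₁) / (cd * (B * Pa₁)) := by
    rw [h1', div_mul_div_comm]
  rw [h1, h2, div_le_div_iff₀ (by positivity) (by positivity)]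
  nlinarith [mul_le_mul_of_nonneg_left h (le_of_lt (mul_pos hA hB))]

open Filter Finset in
private lemma core_gamma_lt (a b x₁ x₂ : ℝ) (hb : 0 < b) (hba : b < a) (hx₁ : 0 ≤ x₁)
    (hx : x₁ < x₂) (hxb : x₂ < b) :
    Real.Gamma (a + x₂) * Real.Gamma (a - x₂) / (Real.Gamma (b + x₂) * Real.Gamma (b - x₂)) <
      Real.Gamma (a + x₁) * Real.Gamma (a - x₁) /
        (Real.Gamma (b + x₁) * Real.Gamma (b - x₁)) := by
  have hx₂0 : 0 ≤ x₂ := le_of_lt (lt_of_le_of_lt hx₁ hx)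
  have hxa : x₂ < a := lt_trans hxb hba
  have hx₁a : x₁ < a := lt_of_lt_of_le hx (le_of_lt hxa)
  have hx₁b : x₁ < b := lt_trans hx hxb
  -- positivity of all Gamma arguments
  have hbp1 : 0 < Real.Gamma (b + x₁) * Real.Gamma (b - x₁) :=
    mul_pos (Real.Gamma_pos_of_pos (by linarith)) (Real.Gamma_pos_of_pos (by linarith))
  have hbp2 : 0 < Real.Gamma (b + x₂) * Real.Gamma (b - x₂) :=
    mul_pos (Real.Gamma_pos_of_pos (by linarith)) (Real.Gamma_pos_of_pos (by linarith))
  have hap1 : 0 < Real.Gamma (a + x₁) * Real.Gamma (a - x₁) :=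
    mul_pos (Real.Gamma_pos_of_pos (by linarith)) (Real.Gamma_pos_of_pos (by linarith))
  set c : ℝ := ((b ^ 2 - x₂ ^ 2) * (a ^ 2 - x₁ ^ 2)) /
      ((b ^ 2 - x₁ ^ 2) * (a ^ 2 - x₂ ^ 2)) with hc_def
  have hK1 : 0 < (b ^ 2 - x₁ ^ 2) * (a ^ 2 - x₂ ^ 2) := by
    have h1 : 0 < b ^ 2 - x₁ ^ 2 := by nlinarith
    have h2 : 0 < a ^ 2 - x₂ ^ 2 := by nlinarith
    exact mul_pos h1 h2
  have hc1 : c < 1 := by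
    rw [hc_def, div_lt_one hK1]
    have ha2 : 0 < a ^ 2 - b ^ 2 := by nlinarith
    have hx2 : 0 < x₂ ^ 2 - x₁ ^ 2 := by nlinarith
    nlinarith [mul_pos ha2 hx2]
  -- the limit argument
  have hT2 : Tendsto (fun n : ℕ =>
      Real.GammaSeq (a + x₂) n * Real.GammaSeq (a - x₂) n /
        (Real.GammaSeq (b + x₂) n * Real.GammaSeq (b - x₂) n)) atTop
      (nhds (Real.Gamma (a + x₂) * Real.Gamma (a - x₂) /
        (Real.Gamma (b + x₂) * Real.Gamma (b - x₂)))) :=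
    ((Real.GammaSeq_tendsto_Gamma _).mul (Real.GammaSeq_tendsto_Gamma _)).div
      ((Real.GammaSeq_tendsto_Gamma _).mul (Real.GammaSeq_tendsto_Gamma _)) (ne_of_gt hbp2)
  have hT1 : Tendsto (fun n : ℕ =>
      c * (Real.GammaSeq (a + x₁) n * Real.GammaSeq (a - x₁) n /
        (Real.GammaSeq (b + x₁) n * Real.GammaSeq (b - x₁) n))) atTop
      (nhds (c * (Real.Gamma (a + x₁) * Real.Gamma (a - x₁) /
        (Real.Gamma (b + x₁) * Real.Gamma (b - x₁))))) :=
    (((Real.GammaSeq_tendsto_Gamma _).mul (Real.GammaSeq_tendsto_Gamma _)).div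
      ((Real.GammaSeq_tendsto_Gamma _).mul (Real.GammaSeq_tendsto_Gamma _))
        (ne_of_gt hbp1)).const_mul c
  have hle : Real.Gamma (a + x₂) * Real.Gamma (a - x₂) /
      (Real.Gamma (b + x₂) * Real.Gamma (b - x₂)) ≤
      c * (Real.Gamma (a + x₁) * Real.Gamma (a - x₁) /
        (Real.Gamma (b + x₁) * Real.Gamma (b - x₁))) := by
    refine le_of_tendsto_of_tendsto hT2 hT1 ?_
    filter_upwards [eventually_ge_atTop 1] with n hn
    have hn0 : n ≠ 0 := by omega
    rw [gammaSeq_pair_mul a x₂ hn0, gammaSeq_pair_mul b x₂ hn0,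
      gammaSeq_pair_mul a x₁ hn0, gammaSeq_pair_mul b x₁ hn0, hc_def]
    have hnr : (0 : ℝ) < (n : ℝ) := by positivity
    have hfac : (0 : ℝ) < (n.factorial : ℝ) * (n.factorial : ℝ) := by positivity
    have hra : (0 : ℝ) < (n : ℝ) ^ (2 * a) := Real.rpow_pos_of_pos hnr _
    have hrb : (0 : ℝ) < (n : ℝ) ^ (2 * b) := Real.rpow_pos_of_pos hnr _
    have hPa2 := prod_pos_aux (b := a) hx₂0 hxa n
    have hPa1 := prod_pos_aux (b := a) hx₁ hx₁a n
    have hPb2 := prod_pos_aux (b := b) hx₂0 hxb n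
    have hPb1 := prod_pos_aux (b := b) hx₁ hx₁b n
    exact aux_div _ _ _ _ _ _ _ _ (mul_pos hra hfac) (mul_pos hrb hfac)
      hPa1 hPa2 hPb1 hPb2 hK1 (core_prod_ineq a b x₁ x₂ hb hba hx₁ hx hxb n)
  calc Real.Gamma (a + x₂) * Real.Gamma (a - x₂) /
        (Real.Gamma (b + x₂) * Real.Gamma (b - x₂))
      ≤ c * (Real.Gamma (a + x₁) * Real.Gamma (a - x₁) /
        (Real.Gamma (b + x₁) * Real.Gamma (b - x₁))) := hle
    _ < 1 * (Real.Gamma (a + x₁) * Real.Gamma (a - x₁) /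
        (Real.Gamma (b + x₁) * Real.Gamma (b - x₁))) :=
        mul_lt_mul_of_pos_right hc1 (div_pos hap1 hbp1)
    _ = _ := one_mul _

/-- The spectral function `γ_β` associated to the fractional Hardy operator. -/
noncomputable def gammaB (N : ℕ) (s β : ℝ) : ℝ :=
  2 ^ (2 * s) * Real.Gamma (((N : ℝ) + 2 * s + 2 * β) / 4) *
      Real.Gamma (((N : ℝ) + 2 * s - 2 * β) / 4) /
    (Real.Gamma (((N : ℝ) - 2 * s + 2 * β) / 4) *
      Real.Gamma (((N : ℝ) - 2 * s - 2 * β) / 4))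

/-- Evenness and strict monotonicity of the spectral map `β ↦ γ_β`. -/
theorem gamma_even_strict_anti (N : ℕ) (hN : 0 < N) (s : ℝ)
    (hs0 : 0 < s) (hs1 : s < 1) (hsN : 2 * s < N) :
    (∀ β : ℝ, |β| < ((N : ℝ) - 2 * s) / 2 → gammaB N s (-β) = gammaB N s β) ∧
    (∀ β₁ β₂ : ℝ, 0 ≤ β₁ → β₁ < β₂ → β₂ < ((N : ℝ) - 2 * s) / 2 →
      gammaB N s β₂ < gammaB N s β₁) := by
  constructor
  · intro β _
    unfold gammaB
    rw [show ((N : ℝ) + 2 * s + 2 * -β) / 4 = ((N : ℝ) + 2 * s - 2 * β) / 4 by ring,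
      show ((N : ℝ) + 2 * s - 2 * -β) / 4 = ((N : ℝ) + 2 * s + 2 * β) / 4 by ring,
      show ((N : ℝ) - 2 * s + 2 * -β) / 4 = ((N : ℝ) - 2 * s - 2 * β) / 4 by ring,
      show ((N : ℝ) - 2 * s - 2 * -β) / 4 = ((N : ℝ) - 2 * s + 2 * β) / 4 by ring]
    ring
  · intro β₁ β₂ h0 h12 h2
    have hrw : ∀ β : ℝ, gammaB N s β =
        2 ^ (2 * s) * (Real.Gamma (((N : ℝ) + 2 * s) / 4 + β / 2) *
            Real.Gamma (((N : ℝ) + 2 * s) / 4 - β / 2) /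
          (Real.Gamma (((N : ℝ) - 2 * s) / 4 + β / 2) *
            Real.Gamma (((N : ℝ) - 2 * s) / 4 - β / 2))) := by
      intro β
      unfold gammaB
      rw [show ((N : ℝ) + 2 * s + 2 * β) / 4 = ((N : ℝ) + 2 * s) / 4 + β / 2 by ring,
        show ((N : ℝ) + 2 * s - 2 * β) / 4 = ((N : ℝ) + 2 * s) / 4 - β / 2 by ring,
        show ((N : ℝ) - 2 * s + 2 * β) / 4 = ((N : ℝ) - 2 * s) / 4 + β / 2 by ring,
        show ((N : ℝ) - 2 * s - 2 * β) / 4 = ((N : ℝ) - 2 * s) / 4 - β / 2 by ring]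
      ring
    rw [hrw β₁, hrw β₂]
    have hpow : (0 : ℝ) < 2 ^ (2 * s) := by positivity
    refine mul_lt_mul_of_pos_left ?_ hpow
    exact core_gamma_lt (((N : ℝ) + 2 * s) / 4) (((N : ℝ) - 2 * s) / 4) (β₁ / 2) (β₂ / 2)
      (by linarith) (by linarith) (by linarith) (by linarith) (by linarith)
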